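/- arXiv:1908.02611 — 3 statements merged into one kernel-verified Lean document; each statement's English description precedes it below -/
import Mathlib

section
/- Let F be a field, n a positive integer, and B a nonzero matrix in Mₙ(F). Then B is strongly independent over F if and only if the characteristic polynomial of B is irreducible in F[t]. -/
open Matrix Polynomial

/-- An `n`-tuple `(B 0, …, B (n-1))` of `n × n` matrices over a field `F` is strongly
independent over `F` if for every nonzero column vector `v ∈ F^{n×1}` the vectors
`B 0 v, …, B (n-1) v` are linearly independent over `F`. -/
def StronglyIndependent (F : Type*) [Field F] {n : ℕ}
    (B : Fin n → Matrix (Fin n) (Fin n) F) : Prop :=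
  ∀ v : Fin n → F, v ≠ 0 → LinearIndependent F (fun i => (B i).mulVec v)


lemma sum_mulVec' {F : Type*} [Field F] {n : ℕ} {ι : Type*} (s : Finset ι)
    (M : ι → Matrix (Fin n) (Fin n) F) (v : Fin n → F) :
    (∑ i ∈ s, M i) *ᵥ v = ∑ i ∈ s, (M i *ᵥ v) := by
  ext j
  simp only [Matrix.mulVec, dotProduct, Finset.sum_apply, Matrix.sum_apply, Finset.sum_mul]
  rw [Finset.sum_comm]

lemma aeval_mulVec {F : Type*} [Field F] {n : ℕ} (B : Matrix (Fin n) (Fin n) F)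
    {g : F[X]} (hg : g.natDegree < n) (v : Fin n → F) :
    (aeval B g) *ᵥ v = ∑ i : Fin n, g.coeff i • ((B ^ (i : ℕ)) *ᵥ v) := by
  rw [aeval_eq_sum_range' hg, sum_mulVec', ← Fin.sum_univ_eq_sum_range
    (fun i => (g.coeff i • B ^ i) *ᵥ v)]
  simp [Matrix.smul_mulVec]

lemma li_iff {F : Type*} [Field F] {n : ℕ} (hn : 0 < n) (B : Matrix (Fin n) (Fin n) F)
    (v : Fin n → F) :
    (LinearIndependent F fun i : Fin n => (B ^ (i : ℕ)) *ᵥ v) ↔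
      ∀ g : F[X], g.natDegree < n → (aeval B g) *ᵥ v = 0 → g = 0 := by
  rw [Fintype.linearIndependent_iff]
  constructor
  · intro H g hdeg hzero
    rw [aeval_mulVec B hdeg v] at hzero
    have := H (fun i => g.coeff i) (by simpa using hzero)
    ext j
    rcases lt_or_ge j n with h | h
    · simpa using this ⟨j, h⟩
    · simp [g.coeff_eq_zero_of_natDegree_lt (lt_of_lt_of_le hdeg h)]
  · intro H c hc
    set g : F[X] := ∑ i : Fin n, C (c i) * X ^ (i : ℕ) with hg
    have hcoeff : ∀ i : Fin n, g.coeff i = c i := by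
      intro i
      rw [hg, finset_sum_coeff, Finset.sum_eq_single i]
      · simp
      · intro b _ hb
        simp only [coeff_C_mul, coeff_X_pow, Fin.val_eq_val]
        rw [if_neg (Ne.symm hb), mul_zero]
      · simp
    have hdeg : g.natDegree < n := by
      have h1 : g.natDegree ≤ n - 1 := by
        apply natDegree_sum_le_of_forall_le
        intro i _
        exact le_trans (natDegree_C_mul_X_pow_le _ _) (by omega)
      omega
    have hzero : (aeval B) g *ᵥ v = 0 := by
      rw [aeval_mulVec B hdeg v]
      simpa only [hcoeff] using hc
    intro i
    rw [← hcoeff i, H g hdeg hzero]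
    simp

theorem matrix_strongly_independent_iff_charpoly_irreducible
    {F : Type*} [Field F] {n : ℕ} (hn : 0 < n)
    (B : Matrix (Fin n) (Fin n) F) (hB : B ≠ 0) :
    StronglyIndependent F (fun i : Fin n => B ^ (i : ℕ)) ↔
      Irreducible B.charpoly := by
  have hcard : B.charpoly.natDegree = n := by
    simpa using B.charpoly_natDegree_eq_dim
  have hne : B.charpoly ≠ 0 := B.charpoly_monic.ne_zero
  constructor
  · intro H
    rw [irreducible_iff]
    constructor
    · intro hu
      have := natDegree_eq_zero_of_isUnit hu
      omega
    · intro p q hpq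
      by_contra hcon
      push_neg at hcon
      obtain ⟨hp, hq⟩ := hcon
      have hp0 : p ≠ 0 := fun h => hne (by simp [hpq, h])
      have hq0 : q ≠ 0 := fun h => hne (by simp [hpq, h])
      have hdpos : ∀ r : F[X], r ≠ 0 → ¬IsUnit r → 0 < r.natDegree := by
        intro r hr0 hru
        have h1 : r.degree ≠ 0 := fun h => hru (isUnit_iff_degree_eq_zero.mpr h)
        have h2 : 0 < r.degree := lt_of_le_of_ne (zero_le_degree_iff.2 hr0) (Ne.symm h1)
        exact natDegree_pos_iff_degree_pos.mpr h2
      have hpd := hdpos p hp0 hp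
      have hqd := hdpos q hq0 hq
      have hsum : p.natDegree + q.natDegree = n := by
        rw [← hcard, hpq, natDegree_mul hp0 hq0]
      have h0 : aeval B p * aeval B q = 0 := by
        rw [← _root_.map_mul, ← hpq, aeval_self_charpoly]
      by_cases hqB : aeval B q = 0
      · have hv : (Pi.single (⟨0, hn⟩ : Fin n) 1 : Fin n → F) ≠ 0 := by
          intro h
          have := congrFun h ⟨0, hn⟩
          simp at this
        exact hq0 ((li_iff hn B _).1 (H _ hv) q (by omega) (by rw [hqB, Matrix.zero_mulVec]))
      · obtain ⟨w, hw⟩ : ∃ w, aeval B q *ᵥ w ≠ 0 := by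
          by_contra h
          push_neg at h
          apply hqB
          ext i j
          simpa using congrFun (h (Pi.single j 1)) i
        refine hp0 ((li_iff hn B _).1 (H _ hw) p (by omega) ?_)
        rw [Matrix.mulVec_mulVec, h0, Matrix.zero_mulVec]
  · intro hirr v hv
    rw [li_iff hn]
    intro g hdeg hzero
    by_contra hg0
    have hnd : ¬ B.charpoly ∣ g := by
      intro hdvd
      have := natDegree_le_of_dvd hdvd hg0
      omega
    obtain ⟨a, b, hab⟩ := hirr.coprime_iff_not_dvd.2 hnd
    have h1 : (aeval B (a * B.charpoly + b * g)) *ᵥ v = v := by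
      rw [hab, _root_.map_one, Matrix.one_mulVec]
    rw [map_add, _root_.map_mul, _root_.map_mul, aeval_self_charpoly, mul_zero, zero_add,
      ← Matrix.mulVec_mulVec, hzero, Matrix.mulVec_zero] at h1
    exact hv h1.symm
end

section
/- If F is an algebraically closed field and n ≥ 2, then there is no n-tuple (B₁, B₂, …, Bₙ) of matrices in Mₙ(F) that is strongly independent over F. -/
open Matrix Polynomial

theorem no_strongly_independent_tuple_of_algClosed
    {F : Type*} [Field F] [IsAlgClosed F] {n : ℕ} (hn : 2 ≤ n) :
    ¬ ∃ B : Fin n → Matrix (Fin n) (Fin n) F, StronglyIndependent F B := by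
  rintro ⟨B, hB⟩
  have hn0 : 0 < n := by omega
  set i0 : Fin n := ⟨0, by omega⟩
  set i1 : Fin n := ⟨1, by omega⟩
  have hne : i0 ≠ i1 := by simp [i0, i1, Fin.ext_iff]
  -- (B i0).mulVecLin is injective
  have hinj : Function.Injective (B i0).mulVecLin := by
    rw [← LinearMap.ker_eq_bot, LinearMap.ker_eq_bot']
    intro v hv
    by_contra hv0
    have := (hB v hv0).ne_zero i0
    exact this hv
  have hbij : Function.Bijective (B i0).mulVecLin :=
    ⟨hinj, (LinearMap.injective_iff_surjective).mp hinj⟩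
  set e : (Fin n → F) ≃ₗ[F] (Fin n → F) := LinearEquiv.ofBijective _ hbij
  haveI : Nontrivial (Fin n → F) := by
    have : Nonempty (Fin n) := ⟨i0⟩
    infer_instance
  set g : Module.End F (Fin n → F) := (e.symm : (Fin n → F) →ₗ[F] (Fin n → F)) ∘ₗ (B i1).mulVecLin
  obtain ⟨μ, hμ⟩ := Module.End.exists_eigenvalue g
  obtain ⟨v, hv⟩ := hμ.exists_hasEigenvector
  have hv0 : v ≠ 0 := hv.right
  have hgv : e.symm ((B i1).mulVec v) = μ • v := hv.apply_eq_smul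
  have hkey : (B i1).mulVec v = μ • (B i0).mulVec v := by
    have := congrArg e hgv
    rw [e.apply_symm_apply, _root_.map_smul] at this
    simpa [e, LinearEquiv.ofBijective_apply] using this
  have hli := hB v hv0
  rw [Fintype.linearIndependent_iff] at hli
  have := hli (fun i => if i = i1 then (1 : F) else if i = i0 then -μ else 0) ?_ i1
  · simp at this
  · rw [Finset.sum_eq_add_of_mem i1 i0 (Finset.mem_univ _) (Finset.mem_univ _) hne.symm]
    · simp [hne, hne.symm, hkey]
    · intro k hk ⟨h1, h0⟩
      simp [h1, h0]
end

section
/- Let μ be a Borel probability measure on the n-torus 𝕋ⁿ and let (B₁, B₂, …, Bₙ) be an n-tuple of matrices in Mₙ(ℤ) that is strongly independent over ℚ. If there exists a nonzero column vector k ∈ ℤ^{n×1} such that μ̂(B_i k) = 1 for every 1 ≤ i ≤ n, then the support of μ is a finite set. -/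
open MeasureTheory Filter Matrix Topology
open scoped symmDiff

instance : Fact ((0:ℝ) < 1) := ⟨one_pos⟩

/-- The `n`-torus `𝕋ⁿ = ℝⁿ/ℤⁿ`, as the product of `n` copies of `ℝ/ℤ`. -/
abbrev Torus (n : ℕ) := Fin n → AddCircle (1 : ℝ)

/-- The `×A` map `T_A` on the `n`-torus, `T_A(x + ℤⁿ) = xA + ℤⁿ` for row vectors `x`. -/
noncomputable def TA {n : ℕ} (A : Matrix (Fin n) (Fin n) ℤ) (x : Torus n) : Torus n :=
  fun j => ∑ i, A i j • x i

/-- The Fourier coefficient `μ̂(k) = ∫_{𝕋ⁿ} z^k dμ(z)` of a measure `μ` on the `n`-torus,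
where `z^k = z₁^{k₁} ⋯ zₙ^{kₙ}`. -/
noncomputable def fc {n : ℕ} (μ : Measure (Torus n)) (k : Fin n → ℤ) : ℂ :=
  ∫ x, ∏ i, fourier (k i) (x i) ∂μ

/-- The support of a measure: the set of points all of whose open neighbourhoods have
positive measure. -/
def msupport {X : Type*} [TopologicalSpace X] [MeasurableSpace X] (μ : Measure X) : Set X :=
  {x | ∀ U : Set X, IsOpen U → x ∈ U → 0 < μ U}

/-!
The characters `χᵢ(x) = ∏ⱼ e((Bᵢ k)ⱼ xⱼ)` have modulus one and `μ`-integral one, so by strict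
convexity of `ℂ` each `χᵢ` equals `1` almost everywhere; as `{χᵢ ≠ 1}` is open, the support of `μ`
lies in `{x | M x = 0}`, where `M` is the integer matrix with rows `Bᵢ k`. Strong independence makes
these rows linearly independent over `ℚ`, so `det M ≠ 0`, and multiplying `M x = 0` by the adjugate
shows that every coordinate of such an `x` is `det M`-torsion in the circle, a finite set.
-/

theorem Matrix.det_smul_eq_zero_of_forall_sum_smul_eq_zero {ι R A : Type*} [Fintype ι]
    [DecidableEq ι] [CommRing R] [AddCommGroup A] [Module R A] (M : Matrix ι ι R) {x : ι → A}
    (hx : ∀ i, ∑ j, M i j • x j = 0) (j : ι) : M.det • x j = 0 := by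
  calc M.det • x j = ∑ l, (M.adjugate * M) j l • x l := by
        simp [adjugate_mul, Matrix.one_apply, ite_smul]
    _ = ∑ i, M.adjugate j i • ∑ l, M i l • x l := by
        simp_rw [Matrix.mul_apply, Finset.sum_smul, Finset.smul_sum, smul_smul]
        exact Finset.sum_comm
    _ = 0 := by simp [hx]

theorem AddCircle.toCircle_sum {ι : Type*} {T : ℝ} (s : Finset ι) (x : ι → AddCircle T) :
    toCircle (∑ j ∈ s, x j) = ∏ j ∈ s, toCircle (x j) := by
  classical
  induction s using Finset.induction_on with
  | empty => simp
  | insert a s ha ih => rw [Finset.sum_insert ha, Finset.prod_insert ha, toCircle_add, ih]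

theorem prod_fourier_eq_toCircle_sum {ι : Type*} [Fintype ι] {T : ℝ} (m : ι → ℤ)
    (x : ι → AddCircle T) :
    ∏ j, fourier (m j) (x j) = (AddCircle.toCircle (∑ j, m j • x j) : ℂ) := by
  simp only [fourier_apply, AddCircle.toCircle_sum]
  exact (map_prod Circle.coeHom _ _).symm

theorem prod_fourier_eq_one_iff {ι : Type*} [Fintype ι] {T : ℝ} (hT : T ≠ 0) (m : ι → ℤ)
    (x : ι → AddCircle T) :
    ∏ j, fourier (m j) (x j) = 1 ↔ ∑ j, m j • x j = 0 := by
  rw [prod_fourier_eq_toCircle_sum, ← Circle.coe_one, Circle.coe_inj,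
    ← AddCircle.toCircle_zero, (AddCircle.injective_toCircle hT).eq_iff]

theorem ae_eq_integral_of_norm_integral_eq {α E : Type*} [MeasurableSpace α] {μ : Measure α}
    [IsProbabilityMeasure μ] [NormedAddCommGroup E] [NormedSpace ℝ E] [CompleteSpace E]
    [StrictConvexSpace ℝ E]
    {f : α → E} {C : ℝ} (h_le : ∀ᵐ x ∂μ, ‖f x‖ ≤ C) (h_eq : ‖∫ x, f x ∂μ‖ = C) :
    f =ᵐ[μ] fun _ => ∫ x, f x ∂μ := by
  have := (ae_eq_const_or_norm_integral_lt_of_norm_le_const h_le).resolve_right (by simp [h_eq])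
  rwa [average_eq_integral] at this

theorem ae_sum_smul_eq_zero_of_fc_eq_one {n : ℕ} {μ : Measure (Torus n)}
    [IsProbabilityMeasure μ] {m : Fin n → ℤ} (h : fc μ m = 1) :
    ∀ᵐ x ∂μ, ∑ j, m j • x j = 0 := by
  have hnorm : ∀ x : Torus n, ‖∏ j, fourier (m j) (x j)‖ = 1 := fun x => by
    rw [prod_fourier_eq_toCircle_sum, Circle.norm_coe]
  have h' : ∫ x, ∏ j, fourier (m j) (x j) ∂μ = 1 := h
  filter_upwards [ae_eq_integral_of_norm_integral_eq (.of_forall fun x => (hnorm x).le)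
    (by rw [h', norm_one])] with x hx
  rw [← prod_fourier_eq_one_iff one_ne_zero, hx, h']

theorem msupport_subset_of_ae_mem {X : Type*} [TopologicalSpace X] [MeasurableSpace X]
    {μ : Measure X} {s : Set X} (hs : IsClosed s) (h : ∀ᵐ x ∂μ, x ∈ s) : msupport μ ⊆ s := by
  intro x hx
  by_contra hxs
  exact (hx sᶜ hs.isOpen_compl hxs).ne' (ae_iff.mp h)

theorem StronglyIndependent.det_ne_zero {F : Type*} [Field F] {n : ℕ}
    {B : Fin n → Matrix (Fin n) (Fin n) F} (hB : StronglyIndependent F B) {v : Fin n → F}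
    (hv : v ≠ 0) : (of fun i => B i *ᵥ v).det ≠ 0 :=
  ((isUnit_iff_isUnit_det _).mp (linearIndependent_rows_iff_isUnit.mp (hB v hv))).ne_zero

theorem det_ne_zero_of_stronglyIndependent_int {n : ℕ} {B : Fin n → Matrix (Fin n) (Fin n) ℤ}
    (hB : StronglyIndependent ℚ (fun i => (B i).map (Int.cast : ℤ → ℚ))) {k : Fin n → ℤ}
    (hk : k ≠ 0) : (of fun i => B i *ᵥ k).det ≠ 0 := by
  have hk' : (Int.cast ∘ k : Fin n → ℚ) ≠ 0 :=
    fun h => hk (funext fun j => by simpa using congrFun h j)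
  have hmap : (of fun i => B i *ᵥ k).map (Int.cast : ℤ → ℚ) =
      of fun i => (B i).map Int.cast *ᵥ (Int.cast ∘ k) := by
    ext i j
    exact RingHom.map_mulVec (Int.castRingHom ℚ) (B i) k j
  have hdet := hB.det_ne_zero hk'
  rwa [← hmap, ← Int.cast_det, Int.cast_ne_zero] at hdet

theorem finite_support_of_strongly_independent
    {n : ℕ} (μ : Measure (Torus n)) [IsProbabilityMeasure μ]
    (B : Fin n → Matrix (Fin n) (Fin n) ℤ)
    (hB : StronglyIndependent ℚ (fun i => (B i).map (Int.cast : ℤ → ℚ)))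
    (k : Fin n → ℤ) (hk : k ≠ 0)
    (h1 : ∀ i : Fin n, fc μ ((B i).mulVec k) = 1) :
    (msupport μ).Finite := by
  set M : Matrix (Fin n) (Fin n) ℤ := of fun i => B i *ᵥ k
  have hclosed : IsClosed {x : Torus n | ∀ i, ∑ j, M i j • x j = 0} := by
    simp only [Set.ofPred_forall]
    exact isClosed_iInter fun i => isClosed_eq (by fun_prop) continuous_const
  have hsupp := msupport_subset_of_ae_mem hclosed
    (ae_all_iff.mpr fun i => ae_sum_smul_eq_zero_of_fc_eq_one (h1 i))
  have htorsion : {y : AddCircle (1 : ℝ) | M.det • y = 0}.Finite :=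
    AddCircle.finite_torsion_of_isSMulRegular_int _ _
      (.of_ne_zero (by exact_mod_cast det_ne_zero_of_stronglyIndependent_int hB hk))
  refine (Set.Finite.pi fun _ => htorsion).subset fun x hx => ?_
  simpa using M.det_smul_eq_zero_of_forall_sum_smul_eq_zero (hsupp hx)
end
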